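/- Let f : F^n → F be in layered canalizing form with r layers of sizes k_1, …, k_r, canalizing depth d, and canalizing input sets S_{i,j}, and suppose the core function P_C is canalizing in the variable x_s with canalizing input set S_s (but P_C is not 1-canalizing). Then the number of transitions changed by deleting x_s satisfies #{x ∈ F^n : f(x_1, …, x_{s−1}, 0, x_{s+1}, …, x_n) ≠ f(x)} ≤ p^{n − d − 1} · (∏_{i=1}^{r} ∏_{j=1}^{k_i} (p − |S_{i,j}|)) · (p − R), where R = |S_s| if 0 ∈ S_s and R = 1 if 0 ∉ S_s. -/

import Mathlib

open Finset

/-- Indicator function of the complement of `S`: `Qt S x = 1` if `x ∉ S`, `0` if `x ∈ S`. -/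
def Qt {F : Type*} [Fintype F] [DecidableEq F] [Zero F] [One F] (S : Finset F) (x : F) : F :=
  if x ∈ S then 0 else 1

/-- `g` actually depends on (is essential in) its `i`-th variable. -/
def EssDependsOn {F : Type*} (n : ℕ) (g : (Fin n → F) → F) (i : Fin n) : Prop :=
  ∃ x y : Fin n → F, (∀ j, j ≠ i → x j = y j) ∧ g x ≠ g y

/-- `g` is canalizing in its `i`-th variable with canalizing input set `S`
(a nonempty proper subset of `F`) and canalizing output `b`. -/
def Canalizing {F : Type*} [Fintype F] [DecidableEq F] (n : ℕ) (g : (Fin n → F) → F)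
    (i : Fin n) (S : Finset F) (b : F) : Prop :=
  S.Nonempty ∧ S ≠ Finset.univ ∧ ∀ x : Fin n → F, x i ∈ S → g x = b

/-- `f` is 1-canalizing in its `i`-th variable with canalizing input set `S`
(a nonempty proper subset of `F`) and canalizing output `b`: `f = b` whenever `x i ∈ S`,
and on `x i ∉ S` the value of `f` is given by a single function of the remaining variables
which is not identically `b`. -/
def OneCanalizing {F : Type*} [Fintype F] [DecidableEq F] (n : ℕ) (f : (Fin n → F) → F)
    (i : Fin n) (S : Finset F) (b : F) : Prop :=
  S.Nonempty ∧ S ≠ Finset.univ ∧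
  (∀ x : Fin n → F, x i ∈ S → f x = b) ∧
  (∀ x y : Fin n → F, x i ∉ S → y i ∉ S → (∀ j, j ≠ i → x j = y j) → f x = f y) ∧
  (∃ x : Fin n → F, x i ∉ S ∧ f x ≠ b)

/-- Nested evaluation `M₁(M₂(⋯(M_r · P + B_r)⋯) + B₂) + B₁`. -/
def nestEval {F : Type*} [Mul F] [Add F] : List (F × F) → F → F
  | [], P => P
  | (m, b) :: t, P => m * nestEval t P + b

/-- Layered canalizing form data for a function of `n` variables with `r ≥ 1` layers:
pairwise disjoint layer blocks, nonempty proper canalizing input sets for the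
layer variables, layer constants `B` with the last one nonzero, and a core function
`P_C` of the remaining variables having no 1-canalizing variables. -/
structure LayeredForm (F : Type*) [Field F] [Fintype F] [DecidableEq F] (n r : ℕ) where
  hr : 0 < r
  layer : Fin r → Finset (Fin n)
  disj : ∀ i j : Fin r, i ≠ j → Disjoint (layer i) (layer j)
  S : Fin n → Finset F
  Sne : ∀ i : Fin r, ∀ v ∈ layer i, (S v).Nonempty
  Spr : ∀ i : Fin r, ∀ v ∈ layer i, S v ≠ Finset.univ
  B : Fin r → F
  Blast : B ⟨r - 1, Nat.sub_lt hr Nat.one_pos⟩ ≠ 0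
  PC : (Fin n → F) → F
  PCvars : ∀ i : Fin r, ∀ v ∈ layer i, ¬ EssDependsOn n PC v
  PCnc : ¬ ∃ (v : Fin n) (S' : Finset F) (b : F), OneCanalizing n PC v S' b

/-- The product `M_i = ∏_{v ∈ L_i} Q̃_{S_v}(x_v)` over the `i`-th layer. -/
def LayeredForm.M {F : Type*} [Field F] [Fintype F] [DecidableEq F] {n r : ℕ}
    (L : LayeredForm F n r) (i : Fin r) (x : Fin n → F) : F :=
  ∏ v ∈ L.layer i, Qt (L.S v) (x v)

/-- The function determined by a layered canalizing form:
`f(x) = M₁(M₂(⋯(M_r · P_C + B_r)⋯) + B₂) + B₁`. -/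
def LayeredForm.eval {F : Type*} [Field F] [Fintype F] [DecidableEq F] {n r : ℕ}
    (L : LayeredForm F n r) (x : Fin n → F) : F :=
  nestEval (List.ofFn fun i => (L.M i x, L.B i)) (L.PC x)

/-- The number of state-space transitions changed when the input `s` of `f`
is replaced by the constant `a` (edge deletion when `a = 0`). -/
def chCount {F : Type*} [Fintype F] [DecidableEq F] {n : ℕ}
    (f : (Fin n → F) → F) (s : Fin n) (a : F) : ℕ :=
  (Finset.univ.filter fun x : Fin n → F => f (Function.update x s a) ≠ f x).card

/-!
Since `s` lies in no layer, replacing `x s` leaves every `M_i` unchanged, and the nested form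
turns a change of `P_C` into the change of `f` multiplied by `M₁ ⋯ M_r`. So a changed
transition needs every layer variable `x_v` outside `S_v`, and a change of `P_C` at `x_s`,
which canalization forbids when `x_s` and `0` both lie in `S_s`, and which is impossible when
`x_s = 0`. These conditions cut out a box whose size is the stated bound.
-/

lemma nestEval_sub {F : Type*} [CommRing F] (l : List (F × F)) (P P' : F) :
    nestEval l P - nestEval l P' = (l.map Prod.fst).prod * (P - P') := by
  induction l with
  | nil => simp [nestEval]
  | cons h t ih =>
    simp only [nestEval, List.map_cons, List.prod_cons]
    linear_combination h.1 * ih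

lemma Canalizing.mem_compl_of_update_ne {F : Type*} [Fintype F] [DecidableEq F] {n : ℕ}
    {g : (Fin n → F) → F} {s : Fin n} {S : Finset F} {b : F} (hg : Canalizing n g s S b)
    {x : Fin n → F} {a : F} (hx : g (Function.update x s a) ≠ g x) :
    x s ∈ (if a ∈ S then S else {a})ᶜ := by
  rw [Finset.mem_compl]
  split_ifs with ha
  · intro hxs
    exact hx (by rw [hg.2.2 _ (by simpa), hg.2.2 x hxs])
  · rw [Finset.mem_singleton]
    rintro rfl
    exact hx (by rw [Function.update_eq_self])

lemma card_compl_ite_singleton {F : Type*} [Fintype F] [DecidableEq F] (S : Finset F) (a : F) :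
    (if a ∈ S then S else {a})ᶜ.card = Fintype.card F - if a ∈ S then S.card else 1 := by
  split_ifs <;> simp [Finset.card_compl]

lemma prod_card_piecewise {ι α : Type*} [Fintype ι] [DecidableEq ι] [Fintype α]
    [DecidableEq α] {U : Finset ι} {s : ι} (hs : s ∉ U) (S : ι → Finset α) (T : Finset α) :
    ∏ v, (if v ∈ U then (S v)ᶜ else if v = s then T else univ).card =
      (∏ v ∈ U, (Fintype.card α - (S v).card)) * T.card *
        Fintype.card α ^ (Fintype.card ι - U.card - 1) := by
  have hsU : s ∈ Uᶜ := Finset.mem_compl.mpr hs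
  rw [← Finset.prod_mul_prod_compl U, ← Finset.mul_prod_erase Uᶜ _ hsU, mul_assoc]
  congr 1
  · exact Finset.prod_congr rfl fun v hv => by simp [hv, Finset.card_compl]
  · have hrest : ∀ v ∈ Uᶜ.erase s,
        (if v ∈ U then (S v)ᶜ else if v = s then T else univ).card = Fintype.card α := by
      intro v hv
      obtain ⟨hvs, hvU⟩ := Finset.mem_erase.mp hv
      simp [Finset.mem_compl.mp hvU, hvs]
    rw [Finset.prod_congr rfl hrest, Finset.prod_const, Finset.card_erase_of_mem hsU,
      Finset.card_compl]
    simp [hs]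

namespace LayeredForm

variable {F : Type*} [Field F] [Fintype F] [DecidableEq F] {n r : ℕ} (L : LayeredForm F n r)

def layerVars : Finset (Fin n) :=
  univ.biUnion L.layer

lemma card_layerVars : L.layerVars.card = ∑ i, (L.layer i).card :=
  Finset.card_biUnion fun i _ j _ hij => L.disj i j hij

lemma prod_layerVars {β : Type*} [CommMonoid β] (g : Fin n → β) :
    ∏ v ∈ L.layerVars, g v = ∏ i, ∏ v ∈ L.layer i, g v :=
  Finset.prod_biUnion fun i _ j _ hij => L.disj i j hij

lemma M_update_of_notMem {s : Fin n} (hs : ∀ i, s ∉ L.layer i) (i : Fin r)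
    (x : Fin n → F) (a : F) : L.M i (Function.update x s a) = L.M i x :=
  Finset.prod_congr rfl fun v hv => by
    rw [Function.update_of_ne (by rintro rfl; exact hs i hv)]

lemma prod_M_eq_zero_of_mem {i : Fin r} {v : Fin n} (hv : v ∈ L.layer i) {x : Fin n → F}
    (hx : x v ∈ L.S v) : ∏ j, L.M j x = 0 :=
  Finset.prod_eq_zero (Finset.mem_univ i) (Finset.prod_eq_zero hv (by simp [Qt, hx]))

lemma eval_update_sub {s : Fin n} (hs : ∀ i, s ∉ L.layer i) (x : Fin n → F) (a : F) :
    L.eval (Function.update x s a) - L.eval x =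
      (∏ i, L.M i x) * (L.PC (Function.update x s a) - L.PC x) := by
  simp only [eval, M_update_of_notMem L hs, nestEval_sub, List.map_ofFn, List.prod_ofFn]
  rfl

lemma changed_subset_piFinset {s : Fin n} (hs : ∀ i, s ∉ L.layer i) {Ss : Finset F} {b : F}
    (hcan : Canalizing n L.PC s Ss b) (a : F) :
    (univ.filter fun x : Fin n → F => L.eval (Function.update x s a) ≠ L.eval x) ⊆
      Fintype.piFinset fun v => if v ∈ L.layerVars then (L.S v)ᶜ
        else if v = s then (if a ∈ Ss then Ss else {a})ᶜ else univ := by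
  intro x hx
  rw [Finset.mem_filter, ← sub_ne_zero, eval_update_sub L hs] at hx
  obtain ⟨hM, hPC⟩ := mul_ne_zero_iff.mp hx.2
  rw [Fintype.mem_piFinset]
  intro v
  by_cases hvU : v ∈ L.layerVars
  · rw [if_pos hvU]
    obtain ⟨i, -, hvi⟩ := Finset.mem_biUnion.mp hvU
    exact Finset.mem_compl.mpr fun hxv => hM (L.prod_M_eq_zero_of_mem hvi hxv)
  rw [if_neg hvU]
  by_cases hvs : v = s
  · subst hvs
    rw [if_pos rfl]
    exact hcan.mem_compl_of_update_ne (sub_ne_zero.mp hPC)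
  · rw [if_neg hvs]
    exact Finset.mem_univ _

end LayeredForm

/-- Edge-deletion bound for a remaining variable `s` in which the core
function `P_C` is canalizing (but `P_C` is not 1-canalizing) with input set `Ss`. -/
theorem stmt12 {F : Type*} [Field F] [Fintype F] [DecidableEq F] {n r : ℕ}
    (f : (Fin n → F) → F) (L : LayeredForm F n r) (hf : f = L.eval)
    (s : Fin n) (hsrem : ∀ i : Fin r, s ∉ L.layer i)
    (Ss : Finset F) (hcan : ∃ b : F, Canalizing n L.PC s Ss b) :
    chCount f s 0 ≤
      Fintype.card F ^ (n - (∑ i : Fin r, (L.layer i).card) - 1) *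
        (∏ i : Fin r, ∏ v ∈ L.layer i, (Fintype.card F - (L.S v).card)) *
        (Fintype.card F - if (0 : F) ∈ Ss then Ss.card else 1) := by
  obtain ⟨b, hb⟩ := hcan
  have hs : s ∉ L.layerVars := by simpa [LayeredForm.layerVars] using hsrem
  subst hf
  calc chCount L.eval s 0
      ≤ _ := Finset.card_le_card (L.changed_subset_piFinset hsrem hb 0)
    _ = _ := by
      rw [Fintype.card_piFinset, prod_card_piecewise hs, L.prod_layerVars, L.card_layerVars,
        card_compl_ite_singleton, Fintype.card_fin]
      ring
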